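/- Let F = ZMod 2 and let I be the ideal of the polynomial ring F[x, y, z] generated by the three elements x + y + z, x*y + y*z + z*x + 1, and x*y*z. Then the quotient ring F[x, y, z] / I has dimension 6 as a vector space over F. -/

import Mathlib

/-!
The relations give `u 0 = u 1 + u 2`, `u 1 ^ 2 = u 1 u 2 + u 2 ^ 2 + 1` and `u 2 ^ 3 = u 2`, so
the six monomials `1, u 1, u 2, u 1 u 2, u 2 ^ 2, u 1 u 2 ^ 2` span the quotient. Conversely, the
`u i` are the roots of `t ^ 3 + t = t (t + 1) ^ 2`, so the variety consists of three double
points, one for each choice of the `u i` that vanishes; over the dual numbers the double root is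
`1 + ε`, and evaluation at these three points maps the quotient onto the 6-dimensional algebra
`𝔽₂[ε] ^ 3`.
-/

open MvPolynomial

/-- The ideal of `𝔽₂[x,y,z]` generated by `x + y + z`, `x*y + y*z + z*x + 1`
and `x*y*z` (the relations defining the SU(3) instanton homology of the theta
web). -/
noncomputable def thetaIdeal : Ideal (MvPolynomial (Fin 3) (ZMod 2)) :=
  Ideal.span
    {X 0 + X 1 + X 2,
     X 0 * X 1 + X 1 * X 2 + X 2 * X 0 + 1,
     X 0 * X 1 * X 2}

theorem add_self_eq_zero_of_algebra_zmod_two {A : Type*} [Semiring A] [Algebra (ZMod 2) A]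
    (x : A) : x + x = 0 := by
  rw [← two_smul (ZMod 2), show (2 : ZMod 2) = 0 from rfl, zero_smul]

theorem Submodule.mul_mem_span_of_forall_mul_mem {R A : Type*} [CommSemiring R] [Semiring A]
    [Algebra R A] {s : Set A} {g : A} (hs : ∀ v ∈ s, v * g ∈ span R s) {m : A}
    (hm : m ∈ span R s) : m * g ∈ span R s :=
  (span_le (p := (span R s).comap (LinearMap.mulRight R g))).mpr hs hm

theorem MvPolynomial.span_eq_top_of_mul_mk_X_mem {σ R : Type*} [CommRing R]
    {I : Ideal (MvPolynomial σ R)} {s : Set (MvPolynomial σ R ⧸ I)} (h1 : 1 ∈ s)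
    (hX : ∀ v ∈ s, ∀ i, v * Ideal.Quotient.mk I (X i) ∈ Submodule.span R s) :
    Submodule.span R s = ⊤ := by
  refine Submodule.eq_top_iff'.mpr fun x ↦ ?_
  obtain ⟨p, rfl⟩ := Ideal.Quotient.mk_surjective x
  induction p using MvPolynomial.induction_on with
  | C r =>
    rw [show Ideal.Quotient.mk I (C r) = r • 1 from
      Algebra.algebraMap_eq_smul_one (A := MvPolynomial σ R ⧸ I) r]
    exact Submodule.smul_mem _ r (Submodule.subset_span h1)
  | add p q hp hq => rw [map_add]; exact Submodule.add_mem _ hp hq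
  | mul_X p i hp =>
    rw [map_mul]
    exact Submodule.mul_mem_span_of_forall_mul_mem (fun v hv ↦ hX v hv i) hp

open DualNumber

instance DualNumber.instModuleFree {R : Type*} [Semiring R] : Module.Free R R[ε] :=
  inferInstanceAs (Module.Free R (R × R))

instance DualNumber.instModuleFinite {R : Type*} [Semiring R] : Module.Finite R R[ε] :=
  inferInstanceAs (Module.Finite R (R × R))

theorem DualNumber.finrank_eq_two {R : Type*} [Ring R] [StrongRankCondition R] :
    Module.finrank R R[ε] = 2 := by
  change Module.finrank R (R × R) = 2
  simp

theorem DualNumber.fst_smul_one_add_snd_smul_eps {R : Type*} [CommSemiring R] (d : R[ε]) :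
    d.fst • 1 + d.snd • ε = d := by
  ext <;> simp

theorem DualNumber.subalgebra_pi_eq_top {ι R : Type*} [Fintype ι] [DecidableEq ι]
    [CommSemiring R] (S : Subalgebra R (ι → R[ε]))
    (h1 : ∀ i, (Pi.single i 1 : ι → R[ε]) ∈ S)
    (hε : ∀ i, (Pi.single i ε : ι → R[ε]) ∈ S) : S = ⊤ := by
  refine Algebra.eq_top_iff.mpr fun x ↦ ?_
  rw [← Finset.univ_sum_single x]
  refine Subalgebra.sum_mem _ fun i _ ↦ ?_
  rw [← fst_smul_one_add_snd_smul_eps (x i), Pi.single_add, Pi.single_smul, Pi.single_smul]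
  exact add_mem (S.smul_mem (h1 i) _) (S.smul_mem (hε i) _)

namespace ThetaWeb

local notation "F" => ZMod 2
local notation "P" => MvPolynomial (Fin 3) (ZMod 2)
local notation "Q" => P ⧸ thetaIdeal

noncomputable def u (i : Fin 3) : Q := Ideal.Quotient.mk thetaIdeal (X i)

theorem u_relations :
    u 0 + u 1 + u 2 = 0 ∧ u 0 * u 1 + u 1 * u 2 + u 2 * u 0 + 1 = 0 ∧ u 0 * u 1 * u 2 = 0 := by
  refine ⟨?_, ?_, ?_⟩ <;>
  · simp only [u, ← map_add, ← map_mul, ← map_one (Ideal.Quotient.mk thetaIdeal)]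
    exact Ideal.Quotient.eq_zero_iff_mem.mpr (Ideal.subset_span (by simp))

theorem u_zero : u 0 = u 1 + u 2 := by
  linear_combination u_relations.1 - add_self_eq_zero_of_algebra_zmod_two (u 1 + u 2)

theorem u_one_sq : u 1 ^ 2 = u 1 * u 2 + u 2 ^ 2 + 1 := by
  linear_combination (u 1 + u 2) * u_relations.1 - u_relations.2.1 -
    add_self_eq_zero_of_algebra_zmod_two (u 1 * u 2 + u 2 ^ 2)

theorem u_two_pow_three : u 2 ^ 3 = u 2 := by
  linear_combination u 1 * u 2 * u_relations.1 - u_relations.2.2 - u 2 * u_one_sq -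
    add_self_eq_zero_of_algebra_zmod_two (u 1 * u 2 ^ 2 + u 2)

def spanningSet : Set Q := {1, u 1, u 2, u 1 * u 2, u 2 ^ 2, u 1 * u 2 ^ 2}

open Submodule in
theorem mul_u_two_mem_span : ∀ v ∈ spanningSet, v * u 2 ∈ span F spanningSet := by
  rintro v (rfl | rfl | rfl | rfl | rfl | rfl)
  · rw [one_mul]; exact subset_span (by simp [spanningSet])
  · exact subset_span (by simp [spanningSet])
  · rw [← sq]; exact subset_span (by simp [spanningSet])
  · rw [mul_assoc, ← sq]; exact subset_span (by simp [spanningSet])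
  · rw [← pow_succ, u_two_pow_three]; exact subset_span (by simp [spanningSet])
  · rw [mul_assoc, ← pow_succ, u_two_pow_three]; exact subset_span (by simp [spanningSet])

open Submodule in
theorem mul_u_one_mem_span : ∀ v ∈ spanningSet, v * u 1 ∈ span F spanningSet := by
  rintro v (rfl | rfl | rfl | rfl | rfl | rfl)
  · rw [one_mul]; exact subset_span (by simp [spanningSet])
  · rw [← sq, u_one_sq]
    exact add_mem (add_mem (subset_span (by simp [spanningSet]))
      (subset_span (by simp [spanningSet]))) (subset_span (by simp [spanningSet]))
  · rw [mul_comm]; exact subset_span (by simp [spanningSet])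
  · rw [show u 1 * u 2 * u 1 = u 1 * u 2 ^ 2 by
      linear_combination u 2 * u_one_sq + u_two_pow_three +
        add_self_eq_zero_of_algebra_zmod_two (u 2)]
    exact subset_span (by simp [spanningSet])
  · rw [mul_comm]; exact subset_span (by simp [spanningSet])
  · rw [show u 1 * u 2 ^ 2 * u 1 = u 1 * u 2 by
      linear_combination u 2 ^ 2 * u_one_sq + u 1 * u_two_pow_three +
        u 2 * u_two_pow_three + add_self_eq_zero_of_algebra_zmod_two (u 2 ^ 2)]
    exact subset_span (by simp [spanningSet])

theorem span_spanningSet : Submodule.span F spanningSet = ⊤ := by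
  refine MvPolynomial.span_eq_top_of_mul_mk_X_mem (by simp [spanningSet]) fun v hv i ↦ ?_
  fin_cases i
  · change v * u 0 ∈ _
    rw [u_zero, mul_add]
    exact add_mem (mul_u_one_mem_span v hv) (mul_u_two_mem_span v hv)
  · exact mul_u_one_mem_span v hv
  · exact mul_u_two_mem_span v hv

instance : Module.Finite F Q :=
  Module.finite_def.mpr (span_spanningSet ▸ Submodule.fg_span (by simp [spanningSet]))

theorem finrank_le_six : Module.finrank F Q ≤ 6 := by
  classical
  rw [← finrank_top, ← span_spanningSet, spanningSet]
  refine (finrank_span_le_card _).trans ?_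
  simp only [Set.toFinset_insert, Set.toFinset_singleton]
  exact Finset.card_le_six

theorem one_add_eps_mul_self : (1 + ε : F[ε]) * (1 + ε) = 1 := by
  linear_combination add_self_eq_zero_of_algebra_zmod_two (ε : F[ε]) + eps_mul_eps (R := F)

/-- `thetaPoint i j` is the value of `u i` at the `j`-th point, where `u j = 0` and the other two
coordinates equal `1 + ε`. -/
def thetaPoint (i j : Fin 3) : F[ε] := if i = j then 0 else 1 + ε

theorem aeval_thetaPoint_eq_zero_of_mem : ∀ p ∈ thetaIdeal, aeval thetaPoint p = 0 := by
  suffices thetaIdeal ≤ RingHom.ker (aeval thetaPoint) from fun p hp ↦ this hp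
  refine Ideal.span_le.mpr ?_
  rintro q (rfl | rfl | rfl) <;> funext j <;> fin_cases j <;>
    simp [thetaPoint, one_add_eps_mul_self, add_self_eq_zero_of_algebra_zmod_two]

theorem aeval_thetaPoint_X_mul_X (l : Fin 3) :
    aeval thetaPoint (X (l + 1) * X (l + 2) : P) = Pi.single l 1 := by
  funext j
  fin_cases l <;> fin_cases j <;> simp [thetaPoint, one_add_eps_mul_self]

theorem single_eps_eq_aeval_thetaPoint (l : Fin 3) :
    Pi.single l ε =
      aeval thetaPoint (X (l + 1) * X (l + 2) * X (l + 1) - X (l + 1) * X (l + 2) : P) := by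
  have hl : thetaPoint (l + 1) l = 1 + ε := by fin_cases l <;> rfl
  rw [map_sub, map_mul, aeval_thetaPoint_X_mul_X, aeval_X, ← Pi.single_mul_left, one_mul, hl,
    ← Pi.single_sub, add_sub_cancel_left]

theorem aeval_thetaPoint_surjective : Function.Surjective (aeval thetaPoint : P → _) := by
  rw [← AlgHom.range_eq_top]
  refine DualNumber.subalgebra_pi_eq_top _ (fun l ↦ ?_) (fun l ↦ ?_)
  · exact ⟨_, aeval_thetaPoint_X_mul_X l⟩
  · exact ⟨_, (single_eps_eq_aeval_thetaPoint l).symm⟩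

noncomputable def evalThetaPoint : Q →ₐ[F] Fin 3 → F[ε] :=
  Ideal.Quotient.liftₐ thetaIdeal (aeval thetaPoint) aeval_thetaPoint_eq_zero_of_mem

theorem evalThetaPoint_surjective : Function.Surjective evalThetaPoint := by
  intro y
  obtain ⟨p, rfl⟩ := aeval_thetaPoint_surjective y
  exact ⟨Ideal.Quotient.mk thetaIdeal p, rfl⟩

theorem six_le_finrank : 6 ≤ Module.finrank F Q := by
  have h := LinearMap.finrank_le_finrank_of_surjective
    (f := evalThetaPoint.toLinearMap) evalThetaPoint_surjective
  rwa [Module.finrank_pi_fintype, DualNumber.finrank_eq_two] at h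

end ThetaWeb

/-- The quotient of `𝔽₂[x,y,z]` by the ideal generated by `x + y + z`,
`x*y + y*z + z*x + 1` and `x*y*z` is a 6-dimensional vector space over `𝔽₂`. -/
theorem theta_web_quotient_dim_six :
    Module.finrank (ZMod 2) (MvPolynomial (Fin 3) (ZMod 2) ⧸ thetaIdeal) = 6 :=
  le_antisymm ThetaWeb.finrank_le_six ThetaWeb.six_le_finrank
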